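/- arXiv:1305.3817 — 3 statements merged into one kernel-verified Lean document; each statement's English description precedes it below -/
import Mathlib

section
/- Let $A = k[T]/(T^{n+1})$ for a field $k$ and natural number $n$, and let $M$ be an $A$-module. Then $M$ is flat over $A$ if and only if for every $m \in M$ with $T^n \cdot m = 0$ there exists $m' \in M$ such that $m = T \cdot m'$. -/
open Polynomial TensorProduct

section Aux

variable {R : Type*} [CommRing R] (t : R) (n : ℕ)

variable {M : Type*} [AddCommGroup M] [Module R M]

/-- The iterated divisibility condition. -/
private lemma key (htn : t ^ (n + 1) = 0)
    (H : ∀ m : M, t ^ n • m = 0 → ∃ m', m = t • m')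
    (j : ℕ) :
    ∀ m : M, t ^ (n + 1 - j) • m = 0 → ∃ m', m = t ^ j • m' := by
  induction j with
  | zero => exact fun m _ => ⟨m, by simp⟩
  | succ j ih =>
    intro m hm
    by_cases hj : j + 1 ≤ n + 1
    · have hjn : j ≤ n := Nat.lt_succ_iff.mp hj
      have h1 : t ^ n • m = 0 := by
        have h : t ^ n = t ^ j * t ^ (n + 1 - (j + 1)) := by
          rw [← pow_add]; congr 1; omega
        rw [h, mul_smul, hm, smul_zero]
      obtain ⟨m₁, rfl⟩ := H m h1
      have h2 : t ^ (n + 1 - j) • m₁ = 0 := by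
        have h : t ^ (n + 1 - j) = t ^ (n + 1 - (j + 1)) * t := by
          rw [← pow_succ]; congr 1; omega
        rw [h, mul_smul, ← hm]
      obtain ⟨m₂, rfl⟩ := ih m₁ h2
      exact ⟨m₂, by rw [← mul_smul, pow_succ']⟩
    · -- j + 1 > n + 1 : n + 1 - (j + 1) = 0, so m = 0
      push_neg at hj
      have h : n + 1 - (j + 1) = 0 := by omega
      rw [h, pow_zero, one_smul] at hm
      exact ⟨0, by rw [hm, smul_zero]⟩

/-- Every element of `I ⊗ M` for `I = span {g}` is a pure tensor `g ⊗ m`. -/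
private lemma span_tensor (g : R) (z : (Ideal.span {g} : Ideal R) ⊗[R] M) :
    ∃ m : M, z = (⟨g, Ideal.subset_span rfl⟩ : Ideal.span {g}) ⊗ₜ[R] m := by
  induction z with
  | zero => exact ⟨0, by simp⟩
  | tmul x m =>
    obtain ⟨x, hx⟩ := x
    obtain ⟨c, rfl⟩ := Ideal.mem_span_singleton'.mp hx
    refine ⟨c • m, ?_⟩
    have h : (⟨c * g, hx⟩ : Ideal.span {g}) = c • ⟨g, Ideal.subset_span rfl⟩ := by
      ext; simp [smul_eq_mul]
    rw [h, TensorProduct.smul_tmul]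
  | add x y hx hy =>
    obtain ⟨mx, rfl⟩ := hx
    obtain ⟨my, rfl⟩ := hy
    exact ⟨mx + my, by rw [TensorProduct.tmul_add]⟩

/-- General flatness criterion. -/
private lemma flat_general (htn : t ^ (n + 1) = 0)
    (hex : ∀ a : R, t ^ n * a = 0 ↔ ∃ b, t * b = a)
    (hideal : ∀ I : Ideal R, ∃ i, i ≤ n + 1 ∧ I = Ideal.span {t ^ i}) :
    Module.Flat R M ↔ ∀ m : M, t ^ n • m = 0 → ∃ m', m = t • m' := by
  constructor
  · intro hFlat m hm
    have hexact : Function.Exact (LinearMap.lsmul R R t) (LinearMap.lsmul R R (t ^ n)) := by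
      intro a
      simp only [LinearMap.lsmul_apply, smul_eq_mul, LinearMap.mem_range]
      rw [hex]
      exact exists_congr fun b => by simp [smul_eq_mul]
    have hex2 := Module.Flat.lTensor_exact (R := R) M hexact
    have h0 : (LinearMap.lsmul R R (t ^ n)).lTensor M (m ⊗ₜ[R] 1) = 0 := by
      simp only [LinearMap.lTensor_tmul, LinearMap.lsmul_apply, smul_eq_mul, mul_one]
      have h1 : m ⊗ₜ[R] (t ^ n) = (t ^ n • m) ⊗ₜ[R] (1 : R) := by
        rw [TensorProduct.smul_tmul, smul_eq_mul, mul_one]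
      rw [h1, hm, TensorProduct.zero_tmul]
    obtain ⟨y, hy⟩ := (hex2 (m ⊗ₜ[R] 1)).mp h0
    refine ⟨(TensorProduct.rid R M) y, ?_⟩
    have hcomm : ∀ z : M ⊗[R] R, (TensorProduct.rid R M) ((LinearMap.lsmul R R t).lTensor M z)
        = t • (TensorProduct.rid R M) z := by
      intro z
      induction z with
      | zero => simp
      | tmul m' a => simp [TensorProduct.rid_tmul, mul_smul]
      | add x y hx hy => simp [hx, hy, smul_add]
    rw [← hcomm, hy]
    simp
  · intro H
    rw [Module.Flat.iff_rTensor_injective']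
    intro I
    rw [injective_iff_map_eq_zero]
    intro z hz
    obtain ⟨i, hi, rfl⟩ := hideal I
    obtain ⟨m, rfl⟩ := span_tensor (t ^ i) z
    have hm : t ^ i • m = 0 := by
      have := congrArg (TensorProduct.lid R M) hz
      simpa using this
    obtain ⟨m', rfl⟩ := key t n htn H (n + 1 - i) m (by
      have h : n + 1 - (n + 1 - i) = i := by omega
      rw [h]; exact hm)
    rw [← TensorProduct.smul_tmul]
    have h0 : (t ^ (n + 1 - i)) • (⟨t ^ i, Ideal.subset_span rfl⟩ : Ideal.span {t ^ i})
        = 0 := by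
      ext
      show (t ^ (n + 1 - i)) * t ^ i = 0
      rw [← pow_add]
      have h : n + 1 - i + i = n + 1 := by omega
      rw [h, htn]
    rw [h0, TensorProduct.zero_tmul]

end Aux

/-- Let `A = k[T]/(T^{n+1})` and `M` an `A`-module. Then `M` is flat over `A`
iff for every `m : M` with `T^n • m = 0` there exists `m'` with `m = T • m'`. -/
theorem stmt_0 {k : Type*} [Field k] (n : ℕ) (M : Type*) [AddCommGroup M]
    [Module (k[X] ⧸ Ideal.span {(X : k[X]) ^ (n + 1)}) M] :
    Module.Flat (k[X] ⧸ Ideal.span {(X : k[X]) ^ (n + 1)}) M ↔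
      ∀ m : M,
        (Ideal.Quotient.mk (Ideal.span {(X : k[X]) ^ (n + 1)}) X) ^ n • m = 0 →
        ∃ m' : M, m = (Ideal.Quotient.mk (Ideal.span {(X : k[X]) ^ (n + 1)}) X) • m' := by
  apply flat_general
  · -- t ^ (n+1) = 0
    rw [← map_pow]
    exact Ideal.Quotient.eq_zero_iff_mem.2 (Ideal.subset_span rfl)
  · -- exactness
    intro a
    obtain ⟨p, rfl⟩ := Ideal.Quotient.mk_surjective a
    constructor
    · intro h
      rw [← map_pow, ← map_mul, Ideal.Quotient.eq_zero_iff_mem,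
        Ideal.mem_span_singleton, pow_succ,
        mul_dvd_mul_iff_left (pow_ne_zero n (X_ne_zero (R := k)))] at h
      obtain ⟨q, rfl⟩ := h
      exact ⟨Ideal.Quotient.mk _ q, by rw [← map_mul]⟩
    · rintro ⟨b, hb⟩
      have h0 : (Ideal.Quotient.mk (Ideal.span {(X : k[X]) ^ (n + 1)})) ((X : k[X]) ^ (n + 1))
          = 0 := Ideal.Quotient.eq_zero_iff_mem.2 (Ideal.subset_span rfl)
      rw [← hb, ← mul_assoc, ← pow_succ, ← map_pow, h0, zero_mul]
  · -- ideal classification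
    intro I
    obtain ⟨p, hp⟩ := (IsPrincipalIdealRing.principal
      (Ideal.comap (Ideal.Quotient.mk (Ideal.span {(X : k[X]) ^ (n + 1)})) I)).principal
    have hXp : (X : k[X]) ^ (n + 1) ∈
        Ideal.comap (Ideal.Quotient.mk (Ideal.span {(X : k[X]) ^ (n + 1)})) I := by
      have h0 : (Ideal.Quotient.mk (Ideal.span {(X : k[X]) ^ (n + 1)})) ((X : k[X]) ^ (n + 1))
          = 0 := Ideal.Quotient.eq_zero_iff_mem.2 (Ideal.subset_span rfl)
      rw [Ideal.mem_comap, h0]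
      exact I.zero_mem
    rw [hp, Ideal.submodule_span_eq, Ideal.mem_span_singleton] at hXp
    obtain ⟨i, hi, hass⟩ := (dvd_prime_pow Polynomial.prime_X (n + 1)).mp hXp
    refine ⟨i, hi, ?_⟩
    have hJ : Ideal.comap (Ideal.Quotient.mk (Ideal.span {(X : k[X]) ^ (n + 1)})) I
        = Ideal.span {(X : k[X]) ^ i} := by
      rw [hp, Ideal.submodule_span_eq, Ideal.span_singleton_eq_span_singleton]
      exact hass
    have hmc := Ideal.map_comap_of_surjective _
      (Ideal.Quotient.mk_surjective (I := Ideal.span {(X : k[X]) ^ (n + 1)})) I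
    rw [hJ] at hmc
    rw [← hmc, Ideal.map_span]
    simp
end

section
/- Let $A$ be a commutative ring containing the field $\mathbb{Q}$ of rational numbers, and let $M$ be a flat $A$-module. Then for every $p \geq 0$, the exterior power $\wedge^p M$ is also a flat $A$-module. -/
/-!
The map `⨂ⁿ M → ⋀ⁿ M`, `v₁ ⊗ ⋯ ⊗ vₙ ↦ v₁ ∧ ⋯ ∧ vₙ`, composed with the antisymmetrization
`v₁ ∧ ⋯ ∧ vₙ ↦ ∑_σ sign σ • v_σ(1) ⊗ ⋯ ⊗ v_σ(n)` is multiplication by `n!`.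
When `n!` is invertible (e.g. over a `ℚ`-algebra), `⋀ⁿ M` is therefore a retract of `⨂ⁿ M`,
which is flat as an iterated tensor product of flat modules, and retracts of flat modules are flat.
-/

open scoped TensorProduct Nat

instance Module.Flat.tensorPower {R M : Type*} [CommRing R] [AddCommGroup M] [Module R M]
    [Module.Flat R M] (n : ℕ) : Module.Flat R (⨂[R]^n M) := by
  induction n with
  | zero => exact .of_linearEquiv (PiTensorProduct.isEmptyEquiv (Fin 0))
  | succ n ih =>
    exact .of_linearEquiv (TensorPower.mulEquiv.symm.trans
      (TensorProduct.congr (.refl R _) (PiTensorProduct.subsingletonEquiv 0)))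

namespace exteriorPower

variable (R M : Type*) [CommRing R] [AddCommGroup M] [Module R M] (n : ℕ)

noncomputable def ofTensorPower : ⨂[R]^n M →ₗ[R] ⋀[R]^n M :=
  PiTensorProduct.lift (ιMulti R n).toMultilinearMap

noncomputable def antisymmetrize : ⋀[R]^n M →ₗ[R] ⨂[R]^n M :=
  alternatingMapLinearEquiv (MultilinearMap.alternatization (PiTensorProduct.tprod R))

theorem ofTensorPower_tprod (v : Fin n → M) :
    ofTensorPower R M n (PiTensorProduct.tprod R v) = ιMulti R n v :=
  PiTensorProduct.lift.tprod v

theorem ofTensorPower_comp_alternatization :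
    (ofTensorPower R M n).compAlternatingMap
      (MultilinearMap.alternatization (PiTensorProduct.tprod R)) = n ! • ιMulti R n := by
  have : (ofTensorPower R M n).compMultilinearMap (PiTensorProduct.tprod R) =
      (ιMulti R n).toMultilinearMap :=
    MultilinearMap.ext (ofTensorPower_tprod R M n)
  rw [← LinearMap.compMultilinearMap_alternatization, this,
    AlternatingMap.coe_alternatization, Fintype.card_fin]

theorem ofTensorPower_comp_antisymmetrize :
    ofTensorPower R M n ∘ₗ antisymmetrize R M n = n ! • LinearMap.id := by
  refine linearMap_ext (AlternatingMap.ext fun v => ?_)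
  simpa [antisymmetrize] using
    AlternatingMap.congr_fun (ofTensorPower_comp_alternatization R M n) v

end exteriorPower

theorem Module.Flat.exteriorPower {R M : Type*} [CommRing R] [AddCommGroup M] [Module R M]
    [Module.Flat R M] {n : ℕ} (hn : IsUnit (n ! : R)) : Module.Flat R (⋀[R]^n M) :=
  .of_retract (hn.unit⁻¹ • exteriorPower.antisymmetrize R M n)
    (exteriorPower.ofTensorPower R M n) <| by
    rw [LinearMap.comp_smul, exteriorPower.ofTensorPower_comp_antisymmetrize,
      ← Nat.cast_smul_eq_nsmul R, Units.smul_def, smul_smul, hn.val_inv_mul, one_smul]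

/-- Let `A` be a commutative ring containing `ℚ` and `M` a flat `A`-module.
Then for every `p`, the exterior power `⋀[A]^p M` is a flat `A`-module. -/
theorem stmt_2 {A : Type*} [CommRing A] [Algebra ℚ A]
    (M : Type*) [AddCommGroup M] [Module A M] [Module.Flat A M] (p : ℕ) :
    Module.Flat A (⋀[A]^p M) :=
  .exteriorPower <| by
    simpa using
      (Nat.cast_ne_zero.mpr p.factorial_ne_zero : (p ! : ℚ) ≠ 0).isUnit.map (algebraMap ℚ A)
end

section
/- Let $R$ be a commutative ring and let $0 \to N \xrightarrow{\iota} T \xrightarrow{\pi} M \to 0$ be a short exact sequence of $R$-modules such that $T$ is reflexive and $M$ is torsion free. Then the double dual of the image of $\iota^\vee : T^\vee \to N^\vee$ satisfies $\mathrm{Im}(\iota^\vee)^\vee \cong N$ (via the natural map), and $M \cong \mathrm{Im}(\pi^{\vee\vee})$ where $\pi^{\vee\vee} : T^{\vee\vee} \to M^{\vee\vee}$ is the double dual map. -/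
open Module

/-- Let `0 → N →ι T →π M → 0` be a short exact sequence of `R`-modules with
`T` reflexive and `M` torsion free (the canonical map `M → M^∨∨` is injective).  Then the
natural map `N → (Im ι^∨)^∨` (evaluation followed by restriction along the inclusion
`Im ι^∨ ⊆ N^∨`) is bijective, and the image of the canonical map `M → M^∨∨` coincides with
the image of `π^∨∨ : T^∨∨ → M^∨∨`, i.e. `M = Im (π^∨∨)`. -/
theorem stmt_6 {R N T M : Type*} [CommRing R]
    [AddCommGroup N] [Module R N] [AddCommGroup T] [Module R T]
    [AddCommGroup M] [Module R M]
    (ι : N →ₗ[R] T) (π : T →ₗ[R] M)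
    (hι : Function.Injective ι) (hπ : Function.Surjective π)
    (hexact : Function.Exact ι π)
    [Module.IsReflexive R T]
    (hM : Function.Injective (Module.Dual.eval R M)) :
    Function.Bijective
        (((LinearMap.range ι.dualMap).subtype.dualMap) ∘ₗ (Module.Dual.eval R N)) ∧
      LinearMap.range (Module.Dual.eval R M) = LinearMap.range (π.dualMap.dualMap) := by
  have hTevalBij : Function.Bijective (Module.Dual.eval R T) :=
    (Module.evalEquiv R T).bijective
  have hnat : ∀ (t : T), π.dualMap.dualMap (Module.Dual.eval R T t)
      = Module.Dual.eval R M (π t) := by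
    intro t; ext ψ; rfl
  constructor
  · constructor
    · intro a b hab
      apply hι
      apply hTevalBij.1
      ext φ
      have hk : ∀ n : N, (((LinearMap.range ι.dualMap).subtype.dualMap ∘ₗ
          Module.Dual.eval R N) n) ⟨ι.dualMap φ, ⟨φ, rfl⟩⟩ = φ (ι n) := fun n => rfl
      have := congrFun (congrArg DFunLike.coe hab) ⟨ι.dualMap φ, ⟨φ, rfl⟩⟩
      simpa [hk] using this
    · intro g
      -- g : Dual R (range ι.dualMap)
      set e : Dual R (Dual R T) := g ∘ₗ ι.dualMap.rangeRestrict with he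
      obtain ⟨t, ht⟩ := hTevalBij.2 e
      have hπt : π t = 0 := by
        apply hM
        rw [map_zero]
        ext ψ
        have h1 : Module.Dual.eval R M (π t) ψ = (π.dualMap ψ) t := rfl
        have h2 : (π.dualMap ψ) t = e (π.dualMap ψ) := by
          rw [← ht]; rfl
        have h3 : ι.dualMap (π.dualMap ψ) = 0 := by
          ext n
          simp [LinearMap.dualMap_apply, hexact.apply_apply_eq_zero]
        rw [h1, h2, he]
        simp only [LinearMap.coe_comp, Function.comp_apply, LinearMap.zero_apply]
        have : ι.dualMap.rangeRestrict (π.dualMap ψ) = 0 := by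
          apply Subtype.ext
          simpa using h3
        rw [this, map_zero]
      obtain ⟨n, hn⟩ := (hexact t).mp hπt
      refine ⟨n, ?_⟩
      ext k
      obtain ⟨kv, φ, hφ⟩ := k
      have : (((LinearMap.range ι.dualMap).subtype.dualMap ∘ₗ
          Module.Dual.eval R N) n) ⟨kv, φ, hφ⟩ = kv n := rfl
      rw [this]
      have hkv : kv n = φ (ι n) := by rw [← hφ]; rfl
      have : g ⟨kv, φ, hφ⟩ = g (ι.dualMap.rangeRestrict φ) := by
        congr 1
        exact Subtype.ext hφ.symm
      rw [hkv, hn, this]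
      have : g (ι.dualMap.rangeRestrict φ) = e φ := rfl
      rw [this, ← ht]
      rfl
  · apply le_antisymm
    · rintro x ⟨m, rfl⟩
      obtain ⟨t, rfl⟩ := hπ m
      exact ⟨Module.Dual.eval R T t, hnat t⟩
    · rintro x ⟨y, rfl⟩
      obtain ⟨t, rfl⟩ := hTevalBij.2 y
      rw [hnat t]
      exact ⟨π t, rfl⟩
end
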